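/- Fix σ_a ∈ ℝ with 0 < σ_a² < 1, let f(x) = (√(1−x²) + (π − arccos x)·x)/π, let g : [−1,1] → [−1,1] send t to the unique fixed point of x = σ_a²·f(x) + (1−σ_a²)·t, set ∠* = g(0), let h(x) = x/(1 − σ_a²·(π − arccos x)/π), and define k = h ∘ g. Then k is differentiable at 0 with k′(0) = h′(∠*)·(1−σ_a²)/(1 − σ_a²·f′(∠*)), where f′(x) = (π − arccos x)/π. -/

import Mathlib

open Real Set Filter Topology Asymptotics

/-- The dual kernel of the normalized ReLU activation `φ(x) = √2·max(x,0)`. -/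
noncomputable def fDual (x : ℝ) : ℝ :=
  (Real.sqrt (1 - x ^ 2) + (Real.pi - Real.arccos x) * x) / Real.pi

/-- The derivative `f′(x) = (π − arccos x)/π` of the dual kernel. -/
noncomputable def fDual' (x : ℝ) : ℝ := (Real.pi - Real.arccos x) / Real.pi

/-- The map `h(x) = x/(1 − σa²·(π − arccos x)/π)` defining the Implicit-NTK. -/
noncomputable def hNTK (σa x : ℝ) : ℝ :=
  x / (1 - σa ^ 2 * (Real.pi - Real.arccos x) / Real.pi)

/-!
The fixed point `g t` satisfies `g t - g 0 = σa² (f (g t) - f (g 0)) + (1 - σa²) t`. Since `f` is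
`1`-Lipschitz on `[-1, 1]` (its derivative `f'` takes values in `[0, 1]`), this gives
`|g t - g 0| ≤ |t|`, so `g` is continuous at `0` and the Taylor remainder of `f` at `g 0` is
`o(t)`. Solving the linearized equation `(1 - σa² f'(g 0)) (g t - g 0) = (1 - σa²) t + o(t)`
gives `g'(0)`; the chain rule finishes, since `g 0 ∈ (-1, 1)` (neither endpoint is a fixed point)
and `h` is differentiable there.
-/

theorem LipschitzOnWith.of_abs_deriv_le_one {D : Set ℝ} (hD : Convex ℝ D) {f : ℝ → ℝ}
    (hf : ContinuousOn f D) (hf' : DifferentiableOn ℝ f (interior D))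
    (hle : ∀ x ∈ interior D, |deriv f x| ≤ 1) : LipschitzOnWith 1 f D := by
  refine LipschitzOnWith.of_le_add fun x hx y hy => ?_
  rw [Real.dist_eq]
  rcases le_total x y with hxy | hyx
  · have := hD.mul_sub_le_image_sub_of_le_deriv hf hf' (C := -1)
      (fun z hz => (abs_le.1 (hle z hz)).1) x hx y hy hxy
    linarith [neg_abs_le (x - y)]
  · have := hD.image_sub_le_mul_sub_of_deriv_le hf hf' (C := 1)
      (fun z hz => (abs_le.1 (hle z hz)).2) y hy x hx hyx
    linarith [le_abs_self (x - y)]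

theorem HasDerivAt.of_eq_mul_add_mul {F g : ℝ → ℝ} {s c F' x : ℝ}
    (hF : HasDerivAt F F' (g x)) (hgF : ∀ᶠ t in 𝓝 x, g t = s * F (g t) + c * t)
    (hO : (fun t => g t - g x) =O[𝓝 x] fun t => t - x) (hD : s * F' ≠ 1) :
    HasDerivAt g (c / (1 - s * F')) x := by
  have hD' : 1 - s * F' ≠ 0 := sub_ne_zero.2 hD.symm
  have hcont : Tendsto g (𝓝 x) (𝓝 (g x)) := by
    have := (hO.trans_tendsto (tendsto_sub_nhds_zero_iff.2 tendsto_id)).add_const (g x)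
    simpa using this
  have hrem : (fun t => F (g t) - F (g x) - (g t - g x) * F') =o[𝓝 x] fun t => t - x := by
    have := (hasDerivAt_iff_isLittleO.1 hF).comp_tendsto hcont
    simpa [smul_eq_mul, Function.comp_def] using this.trans_isBigO hO
  rw [hasDerivAt_iff_isLittleO]
  refine (hrem.const_mul_left (s / (1 - s * F'))).congr' ?_ EventuallyEq.rfl
  filter_upwards [hgF] with t ht
  have hx : g x = s * F (g x) + c * x := hgF.self_of_nhds
  rw [smul_eq_mul]
  field_simp
  linear_combination hx - ht

theorem LipschitzOnWith.isBigO_sub_of_eq_mul_add {F g : ℝ → ℝ} {S : Set ℝ} {s x : ℝ}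
    (hF : LipschitzOnWith 1 F S) (hs0 : 0 ≤ s) (hs1 : s < 1) (hgS : ∀ᶠ t in 𝓝 x, g t ∈ S)
    (hgF : ∀ᶠ t in 𝓝 x, g t = s * F (g t) + (1 - s) * t) :
    (fun t => g t - g x) =O[𝓝 x] fun t => t - x := by
  refine IsBigO.of_bound 1 ?_
  filter_upwards [hgS, hgF] with t hgt ht
  have hlip := hF.dist_le_mul (g t) hgt (g x) hgS.self_of_nhds
  rw [NNReal.coe_one, one_mul, Real.dist_eq, Real.dist_eq] at hlip
  have hsplit : g t - g x = s * (F (g t) - F (g x)) + (1 - s) * (t - x) := by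
    linear_combination ht - hgF.self_of_nhds
  have htri : |g t - g x| ≤ s * |g t - g x| + (1 - s) * |t - x| := by
    calc |g t - g x| ≤ |s * (F (g t) - F (g x))| + |(1 - s) * (t - x)| :=
          hsplit ▸ abs_add_le _ _
      _ ≤ s * |g t - g x| + (1 - s) * |t - x| := by
          rw [abs_mul, abs_mul, abs_of_nonneg hs0, abs_of_pos (sub_pos.2 hs1)]
          gcongr
  rw [Real.norm_eq_abs, Real.norm_eq_abs, one_mul]
  nlinarith

theorem hasDerivAt_fDual {x : ℝ} (h1 : -1 < x) (h2 : x < 1) :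
    HasDerivAt fDual (fDual' x) x := by
  have hx2 : 0 < 1 - x ^ 2 := by nlinarith
  have hsqrt : HasDerivAt (fun y => √(1 - y ^ 2)) (-(2 * x ^ 1) / (2 * √(1 - x ^ 2))) x :=
    (((hasDerivAt_pow 2 x).const_sub 1).sqrt hx2.ne').congr_deriv (by ring)
  have harccos := ((hasDerivAt_arccos h1.ne' h2.ne).const_sub π).mul (hasDerivAt_id' x)
  refine ((hsqrt.add harccos).div_const π).congr_deriv ?_
  have : √(1 - x ^ 2) ≠ 0 := by positivity
  unfold fDual'
  field_simp
  ring

theorem continuous_fDual : Continuous fDual := by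
  unfold fDual
  fun_prop

theorem fDual'_mem_Icc (x : ℝ) : fDual' x ∈ Icc (0 : ℝ) 1 := by
  have := arccos_nonneg x
  have := arccos_le_pi x
  unfold fDual'
  constructor
  · exact div_nonneg (by linarith) pi_pos.le
  · rw [div_le_one pi_pos]
    linarith

theorem lipschitzOnWith_fDual : LipschitzOnWith 1 fDual (Icc (-1) 1) := by
  refine LipschitzOnWith.of_abs_deriv_le_one (convex_Icc _ _) continuous_fDual.continuousOn
    (fun x hx => ?_) fun x hx => ?_ <;> rw [interior_Icc] at hx
  · exact (hasDerivAt_fDual hx.1 hx.2).differentiableAt.differentiableWithinAt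
  · rw [(hasDerivAt_fDual hx.1 hx.2).deriv, abs_of_nonneg (fDual'_mem_Icc x).1]
    exact (fDual'_mem_Icc x).2

theorem fDual_one : fDual 1 = 1 := by
  simp [fDual, pi_ne_zero]

theorem fDual_neg_one : fDual (-1) = 0 := by
  simp [fDual]

theorem mem_Ioo_of_eq_mul_fDual {s x : ℝ} (hs : s < 1) (hx : x ∈ Icc (-1) 1)
    (hfix : x = s * fDual x) : x ∈ Ioo (-1) 1 := by
  refine ⟨hx.1.lt_of_ne ?_, hx.2.lt_of_ne ?_⟩ <;> rintro rfl
  · norm_num [fDual_neg_one] at hfix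
  · rw [fDual_one] at hfix
    linarith

theorem differentiableAt_hNTK {σa x : ℝ} (h1 : -1 < x) (h2 : x < 1)
    (hD : σa ^ 2 * fDual' x ≠ 1) : DifferentiableAt ℝ (hNTK σa) x := by
  have hden : 1 - σa ^ 2 * (π - arccos x) / π ≠ 0 := by
    rw [mul_div_assoc]
    exact sub_ne_zero.2 (Ne.symm hD)
  have harccos := (hasDerivAt_arccos h1.ne' h2.ne).differentiableAt
  unfold hNTK
  fun_prop (disch := assumption)

theorem stmt_11_general (σa : ℝ) (hσ1 : σa ^ 2 < 1)
    (g : ℝ → ℝ)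
    (hg : ∀ t ∈ Set.Icc (-1 : ℝ) 1,
      g t ∈ Set.Icc (-1 : ℝ) 1 ∧ g t = σa ^ 2 * fDual (g t) + (1 - σa ^ 2) * t) :
    HasDerivAt (hNTK σa ∘ g)
      (deriv (hNTK σa) (g 0) * ((1 - σa ^ 2) / (1 - σa ^ 2 * fDual' (g 0)))) 0 := by
  have hg_near : ∀ᶠ t in 𝓝 (0 : ℝ), g t ∈ Icc (-1) 1 ∧
      g t = σa ^ 2 * fDual (g t) + (1 - σa ^ 2) * t :=
    eventually_of_mem (Icc_mem_nhds (by norm_num) (by norm_num)) hg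
  obtain ⟨hg0, hfix⟩ := hg_near.self_of_nhds
  have hg0' : g 0 ∈ Ioo (-1) 1 := mem_Ioo_of_eq_mul_fDual hσ1 hg0 (by simpa using hfix)
  have hD : σa ^ 2 * fDual' (g 0) ≠ 1 :=
    (mul_le_of_le_one_right (sq_nonneg σa) (fDual'_mem_Icc _).2).trans_lt hσ1 |>.ne
  have hgF := hg_near.mono fun _ => And.right
  have hO := lipschitzOnWith_fDual.isBigO_sub_of_eq_mul_add (sq_nonneg σa) hσ1
    (hg_near.mono fun _ => And.left) hgF
  have hg' := (hasDerivAt_fDual hg0'.1 hg0'.2).of_eq_mul_add_mul hgF (by simpa using hO) hD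
  exact (differentiableAt_hNTK hg0'.1 hg0'.2 hD).hasDerivAt.comp 0 hg'

theorem stmt_11 (σa : ℝ) (hσ0 : 0 < σa ^ 2) (hσ1 : σa ^ 2 < 1)
    (g : ℝ → ℝ)
    (hg : ∀ t ∈ Set.Icc (-1 : ℝ) 1,
      g t ∈ Set.Icc (-1 : ℝ) 1 ∧ g t = σa ^ 2 * fDual (g t) + (1 - σa ^ 2) * t) :
    HasDerivAt (hNTK σa ∘ g)
      (deriv (hNTK σa) (g 0) * ((1 - σa ^ 2) / (1 - σa ^ 2 * fDual' (g 0)))) 0 :=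
  stmt_11_general σa hσ1 g hg
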